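/- Let H = p₁² + p₂² + m²q₁² + n²q₂² + a q₁ + b q₂^(-2) on q₂ > 0, with I₁ = p₁² + m²q₁² + a q₁ and I₂ = p₂² + n²q₂² + b q₂^(-2). Define the complex-valued functions A = 2i·m·p₁ + 2m²q₁ + a and B = 2i·n·p₂q₂ + p₂² - n²q₂² + b q₂^(-2). Then for any positive integers m', n' with m = m' and n = n' integers, X = A^(2n) · B^(m) satisfies {H, X} = 0. -/

import Mathlib

open Complex in
/-- Canonical Poisson bracket, extended ℂ-bilinearly, for ℂ-valued functions on ℝ⁴. -/
noncomputable def pbC (F G : ℝ → ℝ → ℝ → ℝ → ℂ) (q1 q2 p1 p2 : ℝ) : ℂ :=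
  deriv (fun x => F x q2 p1 p2) q1 * deriv (fun x => G q1 q2 x p2) p1
  + deriv (fun x => F q1 x p1 p2) q2 * deriv (fun x => G q1 q2 p1 x) p2
  - deriv (fun x => F q1 q2 x p2) p1 * deriv (fun x => G x q2 p1 p2) q1
  - deriv (fun x => F q1 q2 p1 x) p2 * deriv (fun x => G q1 x p1 p2) q2

noncomputable def H (m n : ℕ) (a b : ℝ) (q1 q2 p1 p2 : ℝ) : ℂ :=
  ((p1 ^ 2 + p2 ^ 2 + (m : ℝ) ^ 2 * q1 ^ 2 + (n : ℝ) ^ 2 * q2 ^ 2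
    + a * q1 + b / q2 ^ 2 : ℝ) : ℂ)

noncomputable def A (m : ℕ) (a : ℝ) (q1 p1 : ℝ) : ℂ :=
  2 * Complex.I * (m : ℂ) * (p1 : ℂ) + 2 * (m : ℂ) ^ 2 * (q1 : ℂ) + (a : ℂ)

noncomputable def B (n : ℕ) (b : ℝ) (q2 p2 : ℝ) : ℂ :=
  2 * Complex.I * (n : ℂ) * (p2 : ℂ) * (q2 : ℂ) + (p2 : ℂ) ^ 2
  - (n : ℂ) ^ 2 * (q2 : ℂ) ^ 2 + (b : ℂ) / (q2 : ℂ) ^ 2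

noncomputable def X (m n : ℕ) (a b : ℝ) (q1 q2 p1 p2 : ℝ) : ℂ :=
  A m a q1 p1 ^ (2 * n) * B n b q2 p2 ^ m

/-!
`A` and `B` are eigenfunctions of the Poisson derivation `{H, ·}`: a direct computation gives
`{H, A} = 2imA` and `{H, B} = -4inB`. Since `{H, ·}` obeys the Leibniz rule,
`{H, A^(2n) B^m} = (2n · 2im + m · (-4in)) A^(2n) B^m = 0`.
-/

open Complex

structure SeparatelyDifferentiableAt (G : ℝ → ℝ → ℝ → ℝ → ℂ) (q1 q2 p1 p2 : ℝ) : Prop where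
  dq1 : DifferentiableAt ℝ (fun x => G x q2 p1 p2) q1
  dq2 : DifferentiableAt ℝ (fun x => G q1 x p1 p2) q2
  dp1 : DifferentiableAt ℝ (fun x => G q1 q2 x p2) p1
  dp2 : DifferentiableAt ℝ (fun x => G q1 q2 p1 x) p2

namespace SeparatelyDifferentiableAt

variable {G K : ℝ → ℝ → ℝ → ℝ → ℂ} {q1 q2 p1 p2 : ℝ}

theorem mul (hG : SeparatelyDifferentiableAt G q1 q2 p1 p2)
    (hK : SeparatelyDifferentiableAt K q1 q2 p1 p2) :
    SeparatelyDifferentiableAt (G * K) q1 q2 p1 p2 :=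
  ⟨hG.dq1.mul hK.dq1, hG.dq2.mul hK.dq2, hG.dp1.mul hK.dp1, hG.dp2.mul hK.dp2⟩

theorem pow (hG : SeparatelyDifferentiableAt G q1 q2 p1 p2) (N : ℕ) :
    SeparatelyDifferentiableAt (G ^ N) q1 q2 p1 p2 :=
  ⟨hG.dq1.pow N, hG.dq2.pow N, hG.dp1.pow N, hG.dp2.pow N⟩

end SeparatelyDifferentiableAt

section Leibniz

variable {F G K : ℝ → ℝ → ℝ → ℝ → ℂ} {q1 q2 p1 p2 : ℝ}

theorem pbC_mul_right (hG : SeparatelyDifferentiableAt G q1 q2 p1 p2)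
    (hK : SeparatelyDifferentiableAt K q1 q2 p1 p2) :
    pbC F (G * K) q1 q2 p1 p2 =
      pbC F G q1 q2 p1 p2 * K q1 q2 p1 p2 + G q1 q2 p1 p2 * pbC F K q1 q2 p1 p2 := by
  simp only [pbC, Pi.mul_apply, deriv_fun_mul hG.dq1 hK.dq1, deriv_fun_mul hG.dq2 hK.dq2,
    deriv_fun_mul hG.dp1 hK.dp1, deriv_fun_mul hG.dp2 hK.dp2]
  ring

theorem pbC_pow_right {c : ℂ} (hG : SeparatelyDifferentiableAt G q1 q2 p1 p2)
    (hFG : pbC F G q1 q2 p1 p2 = c * G q1 q2 p1 p2) (N : ℕ) :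
    pbC F (G ^ N) q1 q2 p1 p2 = N * c * G q1 q2 p1 p2 ^ N := by
  induction N with
  | zero => simp [pbC]
  | succ N ih =>
    rw [pow_succ, pbC_mul_right (hG.pow N) hG, ih, hFG]
    simp only [Pi.pow_apply]
    push_cast
    ring

theorem pbC_pow_mul_pow_right {c d : ℂ} (hG : SeparatelyDifferentiableAt G q1 q2 p1 p2)
    (hK : SeparatelyDifferentiableAt K q1 q2 p1 p2)
    (hFG : pbC F G q1 q2 p1 p2 = c * G q1 q2 p1 p2)
    (hFK : pbC F K q1 q2 p1 p2 = d * K q1 q2 p1 p2) (j k : ℕ) :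
    pbC F (G ^ j * K ^ k) q1 q2 p1 p2 =
      (j * c + k * d) * (G q1 q2 p1 p2 ^ j * K q1 q2 p1 p2 ^ k) := by
  rw [pbC_mul_right (hG.pow j) (hK.pow k), pbC_pow_right hG hFG, pbC_pow_right hK hFK]
  simp only [Pi.pow_apply]
  ring

end Leibniz

section Hamiltonian

variable (m n : ℕ) (a b : ℝ) {q1 q2 p1 p2 : ℝ}

theorem hasDerivAt_H_q1 :
    HasDerivAt (fun x => H m n a b x q2 p1 p2) ((2 * m ^ 2 * q1 + a : ℝ) : ℂ) q1 := by
  convert ((((hasDerivAt_pow 2 q1).const_mul ((m : ℝ) ^ 2)).add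
    ((hasDerivAt_id' q1).const_mul a)).add_const
      (p1 ^ 2 + p2 ^ 2 + n ^ 2 * q2 ^ 2 + b / q2 ^ 2)).ofReal_comp using 1
  · funext x; simp only [H, Pi.add_apply]; congr 1; ring
  · norm_num; ring

theorem hasDerivAt_H_p1 :
    HasDerivAt (fun x => H m n a b q1 q2 x p2) ((2 * p1 : ℝ) : ℂ) p1 := by
  convert ((hasDerivAt_pow 2 p1).add_const
    (p2 ^ 2 + m ^ 2 * q1 ^ 2 + n ^ 2 * q2 ^ 2 + a * q1 + b / q2 ^ 2)).ofReal_comp using 1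
  · funext x; simp only [H]; congr 1; ring
  · norm_num

theorem hasDerivAt_H_q2 (hq2 : q2 ≠ 0) :
    HasDerivAt (fun x => H m n a b q1 x p1 p2) ((2 * n ^ 2 * q2 - 2 * b / q2 ^ 3 : ℝ) : ℂ) q2 := by
  convert ((((hasDerivAt_pow 2 q2).const_mul ((n : ℝ) ^ 2)).add
    (((hasDerivAt_pow 2 q2).inv (pow_ne_zero 2 hq2)).const_mul b)).add_const
      (p1 ^ 2 + p2 ^ 2 + m ^ 2 * q1 ^ 2 + a * q1)).ofReal_comp using 1
  · funext x; simp only [H, Pi.add_apply, Pi.inv_apply]; congr 1; ring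
  · norm_num; field_simp; ring

theorem hasDerivAt_H_p2 :
    HasDerivAt (fun x => H m n a b q1 q2 p1 x) ((2 * p2 : ℝ) : ℂ) p2 := by
  convert ((hasDerivAt_pow 2 p2).add_const
    (p1 ^ 2 + m ^ 2 * q1 ^ 2 + n ^ 2 * q2 ^ 2 + a * q1 + b / q2 ^ 2)).ofReal_comp using 1
  · funext x; simp only [H]; congr 1; ring
  · norm_num

theorem hasDerivAt_A_q1 : HasDerivAt (fun x => A m a x p1) (2 * m ^ 2) q1 := by
  convert (((hasDerivAt_id' (q1 : ℂ)).const_mul (2 * (m : ℂ) ^ 2)).add_const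
    (2 * I * m * p1 + a : ℂ)).comp_ofReal using 1
  · funext x; simp only [A]; ring
  · ring

theorem hasDerivAt_A_p1 : HasDerivAt (fun x => A m a q1 x) (2 * I * m) p1 := by
  convert (((hasDerivAt_id' (p1 : ℂ)).const_mul (2 * I * m)).add_const
    (2 * m ^ 2 * q1 + a : ℂ)).comp_ofReal using 1
  · funext x; simp only [A]; ring
  · ring

theorem hasDerivAt_B_q2 (hq2 : q2 ≠ 0) :
    HasDerivAt (fun x => B n b x p2) (2 * I * n * p2 - 2 * n ^ 2 * q2 - 2 * b / q2 ^ 3) q2 := by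
  have hq2' : (q2 : ℂ) ≠ 0 := ofReal_ne_zero.mpr hq2
  convert (((((hasDerivAt_id' (q2 : ℂ)).const_mul (2 * I * n * p2)).sub
    ((hasDerivAt_pow 2 (q2 : ℂ)).const_mul ((n : ℂ) ^ 2))).add
    (((hasDerivAt_pow 2 (q2 : ℂ)).inv (pow_ne_zero 2 hq2')).const_mul (b : ℂ))).add_const
      ((p2 : ℂ) ^ 2)).comp_ofReal using 1
  · funext x; simp only [B, Pi.add_apply, Pi.sub_apply, Pi.inv_apply]; ring
  · norm_num; field_simp; ring

theorem hasDerivAt_B_p2 : HasDerivAt (fun x => B n b q2 x) (2 * I * n * q2 + 2 * p2) p2 := by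
  convert ((((hasDerivAt_id' (p2 : ℂ)).const_mul (2 * I * n * q2)).add
    (hasDerivAt_pow 2 (p2 : ℂ))).add_const (-(n : ℂ) ^ 2 * q2 ^ 2 + b / q2 ^ 2)).comp_ofReal
    using 1
  · funext x; simp only [B, Pi.add_apply]; ring
  · norm_num

theorem separatelyDifferentiableAt_A :
    SeparatelyDifferentiableAt (fun q1 _ p1 _ => A m a q1 p1) q1 q2 p1 p2 :=
  ⟨(hasDerivAt_A_q1 m a).differentiableAt, differentiableAt_const _,
    (hasDerivAt_A_p1 m a).differentiableAt, differentiableAt_const _⟩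

theorem separatelyDifferentiableAt_B (hq2 : q2 ≠ 0) :
    SeparatelyDifferentiableAt (fun _ q2 _ p2 => B n b q2 p2) q1 q2 p1 p2 :=
  ⟨differentiableAt_const _, (hasDerivAt_B_q2 n b hq2).differentiableAt,
    differentiableAt_const _, (hasDerivAt_B_p2 n b).differentiableAt⟩

theorem pbC_H_A :
    pbC (H m n a b) (fun q1 _ p1 _ => A m a q1 p1) q1 q2 p1 p2 = 2 * I * m * A m a q1 p1 := by
  rw [pbC, (hasDerivAt_H_q1 m n a b).deriv, (hasDerivAt_A_p1 m a).deriv,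
    (hasDerivAt_H_p1 m n a b).deriv, (hasDerivAt_A_q1 m a).deriv, deriv_const, deriv_const, A]
  push_cast
  linear_combination (-4 * m ^ 2 * p1 : ℂ) * I_sq

theorem pbC_H_B (hq2 : q2 ≠ 0) :
    pbC (H m n a b) (fun _ q2 _ p2 => B n b q2 p2) q1 q2 p1 p2 = -4 * I * n * B n b q2 p2 := by
  rw [pbC, (hasDerivAt_H_q2 m n a b hq2).deriv, (hasDerivAt_B_p2 n b).deriv,
    (hasDerivAt_H_p2 m n a b).deriv, (hasDerivAt_B_q2 n b hq2).deriv, deriv_const, deriv_const, B]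
  have hq2' : (q2 : ℂ) ≠ 0 := ofReal_ne_zero.mpr hq2
  push_cast
  field_simp
  linear_combination (8 * n ^ 2 * p2 * q2 ^ 4 : ℂ) * I_sq

end Hamiltonian

theorem stmt18_general (m n : ℕ) (a b : ℝ)
    (q1 q2 p1 p2 : ℝ) (hq2 : 0 < q2) :
    pbC (H m n a b) (X m n a b) q1 q2 p1 p2 = 0 := by
  have hX : X m n a b =
      (fun q1 _ p1 _ => A m a q1 p1) ^ (2 * n) * (fun _ q2 _ p2 => B n b q2 p2) ^ m := rfl
  rw [hX, pbC_pow_mul_pow_right (separatelyDifferentiableAt_A m a)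
    (separatelyDifferentiableAt_B n b hq2.ne') (pbC_H_A m n a b) (pbC_H_B m n a b hq2.ne')]
  push_cast
  ring

theorem stmt18 (m n : ℕ) (hm : 0 < m) (hn : 0 < n) (a b : ℝ)
    (q1 q2 p1 p2 : ℝ) (hq2 : 0 < q2) :
    pbC (H m n a b) (X m n a b) q1 q2 p1 p2 = 0 :=
  stmt18_general m n a b q1 q2 p1 p2 hq2
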